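/- Let P be the uniform distribution on [0,1] and for n ≥ 1 define g(d) = d^3/3 + d/10000 + (1-d)^3/(12 n^2) for d ∈ [0,1]. Then g attains its minimum on [0, 1] at d = (50 - n√(10001 - 4n^2))/(50 - 200 n^2) when 1 ≤ n ≤ 50; this critical value satisfies d > 0 for 1 ≤ n ≤ 49 and d = 0 for n = 50. -/

import Mathlib

/-!
The derivative `g'(d) = d² + 1/10000 - (1 - d)²/(4n²)` has, up to the factor `4n²`, the numerator
`(4n² - 1)d² + 2d + n²/2500 - 1`, whose larger root is the given critical value `d₀`. Factoring out
`d - d₀`, the other factor is positive for `d > 0` as soon as `d₀ ≥ 0`, so `g` decreases up to `d₀`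
and increases after it. Finally `(n√(10001 - 4n²))² - 50² = (2500 - n²)(4n² - 1)`, which makes
the numerator `50 - n√(10001 - 4n²)` of `d₀` negative for `n < 50` and zero for `n = 50`, while its
denominator is negative.
-/

open Real Set

noncomputable section

def distortion (N d : ℝ) : ℝ := d ^ 3 / 3 + d / 10000 + (1 - d) ^ 3 / (12 * N ^ 2)

def criticalPoint (N : ℝ) : ℝ := (50 - N * √(10001 - 4 * N ^ 2)) / (50 - 200 * N ^ 2)

end

theorem hasDerivAt_distortion (N x : ℝ) :
    HasDerivAt (distortion N) (x ^ 2 + 1 / 10000 - (1 - x) ^ 2 / (4 * N ^ 2)) x := by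
  have h := (((hasDerivAt_pow 3 x).div_const 3).fun_add
    ((hasDerivAt_id' x).div_const 10000)).fun_add
    ((((hasDerivAt_id' x).const_sub 1).fun_pow 3).div_const (12 * N ^ 2))
  exact h.congr_deriv (by ring)

variable {N : ℝ}

theorem sq_mul_sqrt_sub_sq_fifty (h : 4 * N ^ 2 ≤ 10001) :
    (N * √(10001 - 4 * N ^ 2)) ^ 2 - 50 ^ 2 = (50 ^ 2 - N ^ 2) * (4 * N ^ 2 - 1) := by
  rw [mul_pow, sq_sqrt (by linarith)]
  ring

theorem criticalPoint_isRoot (h1 : 1 ≤ N) (h50 : N ≤ 50) :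
    (4 * N ^ 2 - 1) * criticalPoint N ^ 2 + 2 * criticalPoint N + N ^ 2 / 2500 - 1 = 0 := by
  set d := criticalPoint N
  set m := 50 - N * √(10001 - 4 * N ^ 2)
  have hD : 50 - 200 * N ^ 2 ≠ 0 := by nlinarith
  have hd : d * (50 - 200 * N ^ 2) = m := div_mul_cancel₀ _ hD
  have key := sq_mul_sqrt_sub_sq_fifty (N := N) (by nlinarith)
  -- After multiplying by `D² = (50 - 200N²)²` and substituting `d D = m`, the equation is
  -- `(4N² - 1)` times `key`, because `D = -50 (4N² - 1)`.
  have : ((4 * N ^ 2 - 1) * d ^ 2 + 2 * d + N ^ 2 / 2500 - 1) * (50 - 200 * N ^ 2) ^ 2 = 0 := by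
    linear_combination
      ((4 * N ^ 2 - 1) * (d * (50 - 200 * N ^ 2) + m) + 2 * (50 - 200 * N ^ 2)) * hd
        + (4 * N ^ 2 - 1) * key
  simpa [hD] using this

theorem fifty_le_mul_sqrt (h1 : 1 ≤ N) (h50 : N ≤ 50) : 50 ≤ N * √(10001 - 4 * N ^ 2) := by
  have key := sq_mul_sqrt_sub_sq_fifty (N := N) (by nlinarith)
  refine (pow_le_pow_iff_left₀ (by norm_num) (by positivity) two_ne_zero).1 ?_
  nlinarith [mul_nonneg (by nlinarith : (0 : ℝ) ≤ 50 ^ 2 - N ^ 2)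
    (by nlinarith : (0 : ℝ) ≤ 4 * N ^ 2 - 1)]

theorem fifty_lt_mul_sqrt (h1 : 1 ≤ N) (h50 : N < 50) : 50 < N * √(10001 - 4 * N ^ 2) := by
  have key := sq_mul_sqrt_sub_sq_fifty (N := N) (by nlinarith)
  refine (pow_lt_pow_iff_left₀ (by norm_num) (by positivity) two_ne_zero).1 ?_
  nlinarith [mul_pos (by nlinarith : (0 : ℝ) < 50 ^ 2 - N ^ 2)
    (by nlinarith : (0 : ℝ) < 4 * N ^ 2 - 1)]

theorem criticalPoint_nonneg (h1 : 1 ≤ N) (h50 : N ≤ 50) : 0 ≤ criticalPoint N :=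
  div_nonneg_of_nonpos (by linarith [fifty_le_mul_sqrt h1 h50]) (by nlinarith)

theorem criticalPoint_pos (h1 : 1 ≤ N) (h50 : N < 50) : 0 < criticalPoint N :=
  div_pos_of_neg_of_neg (by linarith [fifty_lt_mul_sqrt h1 h50]) (by nlinarith)

theorem criticalPoint_fifty : criticalPoint 50 = 0 := by
  norm_num [criticalPoint]

theorem deriv_distortion (h1 : 1 ≤ N) (h50 : N ≤ 50) (x : ℝ) :
    deriv (distortion N) x =
      (x - criticalPoint N) * ((4 * N ^ 2 - 1) * (x + criticalPoint N) + 2) / (4 * N ^ 2) := by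
  have hN : N ≠ 0 := by positivity
  rw [(hasDerivAt_distortion N x).deriv]
  field_simp
  linear_combination 10000 * criticalPoint_isRoot h1 h50

theorem isMinOn_distortion_criticalPoint (h1 : 1 ≤ N) (h50 : N ≤ 50) :
    IsMinOn (distortion N) (Icc 0 1) (criticalPoint N) := by
  have hdiff : Differentiable ℝ (distortion N) :=
    fun x ↦ (hasDerivAt_distortion N x).differentiableAt
  have hcont x : ContinuousAt (distortion N) x := hdiff.continuous.continuousAt
  have hd := criticalPoint_nonneg h1 h50
  have hfactor x (hx : 0 < x) : 0 < (4 * N ^ 2 - 1) * (x + criticalPoint N) + 2 := by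
    nlinarith [mul_pos (by nlinarith : 0 < 4 * N ^ 2 - 1) (by linarith : 0 < x + criticalPoint N)]
  refine isMinOn_Icc_of_deriv (hcont 0) (hcont _) (hcont 1) hdiff.differentiableOn
    hdiff.differentiableOn (fun x hx ↦ ?_) (fun x hx ↦ ?_) <;> rw [deriv_distortion h1 h50]
  · exact div_nonpos_of_nonpos_of_nonneg
      (mul_nonpos_of_nonpos_of_nonneg (by linarith [hx.2]) (hfactor x hx.1).le) (by positivity)
  · exact div_nonneg (mul_nonneg (by linarith [hx.1]) (hfactor x (by linarith [hx.1])).le)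
      (by positivity)

theorem stmt17 (n : ℕ) (hn : 1 ≤ n) (hn' : n ≤ 50)
    (g : ℝ → ℝ)
    (hg : ∀ d, g d = d^3 / 3 + d / 10000 + (1 - d)^3 / (12 * (n : ℝ)^2)) :
    IsMinOn g (Set.Icc 0 1)
      ((50 - (n : ℝ) * Real.sqrt (10001 - 4 * (n : ℝ)^2)) / (50 - 200 * (n : ℝ)^2)) ∧
    (n ≤ 49 →
      0 < (50 - (n : ℝ) * Real.sqrt (10001 - 4 * (n : ℝ)^2)) / (50 - 200 * (n : ℝ)^2)) ∧
    (n = 50 →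
      (50 - (n : ℝ) * Real.sqrt (10001 - 4 * (n : ℝ)^2)) / (50 - 200 * (n : ℝ)^2) = 0) := by
  obtain rfl : g = distortion n := funext hg
  have h1 : (1 : ℝ) ≤ n := by exact_mod_cast hn
  refine ⟨isMinOn_distortion_criticalPoint h1 (by exact_mod_cast hn'), fun h49 ↦ ?_, ?_⟩
  · exact criticalPoint_pos h1 (by exact_mod_cast Nat.lt_succ_of_le h49)
  · rintro rfl
    exact criticalPoint_fifty
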